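/- arXiv:2504.17019 — 7 statements merged into one kernel-verified Lean document; each statement's English description precedes it below -/
import Mathlib

section
/- Necessity of the SMQ stopping rule: let N be a finite index set, δ ≥ 0 a real, and for each j ∈ N reals ℓ_j ≤ r_j. Let S ⊆ N be nonempty with N∖S nonempty, and let x_i ∈ [ℓ_i, r_i] for every i ∈ S. Suppose min_{i∈S} x_i > (min_{j∈N∖S} ℓ_j) + δ and min_{i∈S} x_i ≤ r_j for every j ∈ N∖S. Then for every real v there exists a completion x' : N → ℝ with x'_i = x_i for all i ∈ S and x'_j ∈ {ℓ_j, r_j} for all j ∈ N∖S such that it is NOT the case that min_{j∈N} x'_j ≤ v ≤ (min_{j∈N} x'_j) + δ. -/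
/-!
Compare the two extreme completions: setting every unqueried variable to its right endpoint
gives minimum at least `m = min_{i ∈ S} x i` (this is where `m ≤ r j` enters), while setting them
to their left endpoints gives minimum at most `min_{j ∉ S} ℓ j < m - δ`. A value `v < m` is below
the first minimum, and a value `v ≥ m` exceeds the second one by more than `δ`.
-/

namespace Finset

variable {ι α : Type*} [SemilatticeInf α] {s t : Finset ι} [∀ i, Decidable (i ∈ s)]
  {f g : ι → α}

theorem le_inf'_piecewise (ht : t.Nonempty) {a : α} (hf : ∀ i ∈ s, a ≤ f i)
    (hg : ∀ i ∉ s, a ≤ g i) : a ≤ t.inf' ht (s.piecewise f g) :=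
  le_inf' _ _ fun i _ => by
    by_cases hi : i ∈ s
    · simpa [hi] using hf i hi
    · simpa [hi] using hg i hi

theorem inf'_piecewise_le_of_notMem (ht : t.Nonempty) {j : ι} (hjt : j ∈ t) (hjs : j ∉ s) :
    t.inf' ht (s.piecewise f g) ≤ g j :=
  (inf'_le _ hjt).trans_eq (piecewise_eq_of_notMem _ _ _ hjs)

end Finset

open Finset in
theorem smq_stopping_rule_necessary_general {ι : Type*} [Fintype ι] [Nonempty ι] [DecidableEq ι]
    (δ : ℝ) (ℓ r : ι → ℝ)
    (S : Finset ι) (hS : S.Nonempty) (hSc : Sᶜ.Nonempty)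
    (x : ι → ℝ)
    (hfail : Sᶜ.inf' hSc ℓ + δ < S.inf' hS x)
    (hdummy : ∀ j ∈ Sᶜ, S.inf' hS x ≤ r j)
    (v : ℝ) :
    ∃ x' : ι → ℝ, (∀ i ∈ S, x' i = x i) ∧ (∀ j ∈ Sᶜ, x' j = ℓ j ∨ x' j = r j) ∧
      ¬ (Finset.univ.inf' Finset.univ_nonempty x' ≤ v ∧
          v ≤ Finset.univ.inf' Finset.univ_nonempty x' + δ) := by
  rcases lt_or_ge v (S.inf' hS x) with hv | hv
  · refine ⟨S.piecewise x r, fun i hi => piecewise_eq_of_mem _ _ _ hi,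
      fun j hj => Or.inr (piecewise_eq_of_notMem _ _ _ (mem_compl.1 hj)), fun hmin => ?_⟩
    have hle : S.inf' hS x ≤ univ.inf' univ_nonempty (S.piecewise x r) :=
      le_inf'_piecewise _ (fun i hi => inf'_le x hi) fun j hj => hdummy j (mem_compl.2 hj)
    linarith [hmin.1]
  · obtain ⟨j₀, hj₀, hℓ⟩ := exists_mem_eq_inf' hSc ℓ
    refine ⟨S.piecewise x ℓ, fun i hi => piecewise_eq_of_mem _ _ _ hi,
      fun j hj => Or.inl (piecewise_eq_of_notMem _ _ _ (mem_compl.1 hj)), fun hmin => ?_⟩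
    have hle : univ.inf' univ_nonempty (S.piecewise x ℓ) ≤ ℓ j₀ :=
      inf'_piecewise_le_of_notMem _ (mem_univ j₀) (mem_compl.1 hj₀)
    linarith [hmin.2]

/-- **Necessity of the SMQ stopping rule.**
Let `N` (here, the whole finite type `ι`) be the index set, `δ ≥ 0`, and `ℓ j ≤ r j` for all `j`.
Let `S` be nonempty with nonempty complement, and `x i ∈ [ℓ i, r i]` for `i ∈ S`.
If `min_{i ∈ S} x i > (min_{j ∉ S} ℓ j) + δ` and `min_{i ∈ S} x i ≤ r j` for every `j ∉ S`,
then for every real `v` there is a completion `x'` of `x` taking endpoint values on `Sᶜ`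
such that `v` is not a `δ`-minimum of `x'`. -/
theorem smq_stopping_rule_necessary {ι : Type*} [Fintype ι] [Nonempty ι] [DecidableEq ι]
    (δ : ℝ) (hδ : 0 ≤ δ) (ℓ r : ι → ℝ) (hlr : ∀ j, ℓ j ≤ r j)
    (S : Finset ι) (hS : S.Nonempty) (hSc : Sᶜ.Nonempty)
    (x : ι → ℝ) (hx : ∀ i ∈ S, ℓ i ≤ x i ∧ x i ≤ r i)
    (hfail : Sᶜ.inf' hSc ℓ + δ < S.inf' hS x)
    (hdummy : ∀ j ∈ Sᶜ, S.inf' hS x ≤ r j)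
    (v : ℝ) :
    ∃ x' : ι → ℝ, (∀ i ∈ S, x' i = x i) ∧ (∀ j ∈ Sᶜ, x' j = ℓ j ∨ x' j = r j) ∧
      ¬ (Finset.univ.inf' Finset.univ_nonempty x' ≤ v ∧
          v ≤ Finset.univ.inf' Finset.univ_nonempty x' + δ) :=
  smq_stopping_rule_necessary_general δ ℓ r S hS hSc x hfail hdummy v
end

section
/- Soundness of the new SMQI stopping rule: let N be a nonempty finite index set, δ ≥ 0 a real, and for each j ∈ N reals ℓ_j, r_j and x_j with ℓ_j ≤ x_j ≤ r_j. Fix i ∈ N and suppose that every j ∈ N with j ≠ i and ℓ_j < r_i − δ satisfies x_j ≥ r_i − δ. Then x_i ≤ (min_{j∈N} x_j) + δ, i.e., i is a δ-minimizer. -/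
/-- **Soundness of the new SMQI stopping rule.**
Let `N` be a nonempty finite index set, `δ ≥ 0`, and `ℓ j ≤ x j ≤ r j` for all `j ∈ N`.
Fix `i ∈ N` and suppose every `j ∈ N` with `j ≠ i` and `ℓ j < r i - δ` satisfies
`x j ≥ r i - δ`. Then `x i ≤ (min_{j ∈ N} x j) + δ`, i.e. `i` is a `δ`-minimizer. -/
theorem smqi_new_stopping_rule_sound {ι : Type*}
    (N : Finset ι) (hN : N.Nonempty) (δ : ℝ) (hδ : 0 ≤ δ)
    (ℓ r x : ι → ℝ)
    (hlx : ∀ j ∈ N, ℓ j ≤ x j) (hxr : ∀ j ∈ N, x j ≤ r j)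
    (i : ι) (hi : i ∈ N)
    (h : ∀ j ∈ N, j ≠ i → ℓ j < r i - δ → r i - δ ≤ x j) :
    x i ≤ N.inf' hN x + δ := by
  obtain ⟨j, hj, hjmin⟩ := N.exists_mem_eq_inf' hN x
  rw [hjmin]
  rcases eq_or_ne j i with rfl | hne
  · linarith
  · rcases lt_or_ge (ℓ j) (r i - δ) with hlt | hge
    · have := h j hj hne hlt
      have := hxr i hi
      linarith
    · have := hlx j hj
      have := hxr i hi
      linarith
end

section
/- Core product inequality of Lemma 2.4: let N be a finite set, k a natural number, and p, q : N → ℝ with 0 ≤ q_i ≤ p_i ≤ 1 for all i ∈ N. Let T, B ⊆ N with |T| = k, and let B'' ⊆ B with |B''| = k. Assume that if T∖B is nonempty, then q_i ≤ min_{d ∈ T∖B} p_d for every i ∈ B''∖T. Then ∏_{i∈T} p_i ≥ ∏_{i∈B} q_i. -/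
/-- Dropping factors in `[0,1]` increases a product. -/
lemma prod_subset_le {ι : Type*} [DecidableEq ι] {s t : Finset ι} (f : ι → ℝ)
    (hts : t ⊆ s) (h0 : ∀ i ∈ s, 0 ≤ f i) (h1 : ∀ i ∈ s, f i ≤ 1) :
    ∏ i ∈ s, f i ≤ ∏ i ∈ t, f i := by
  have := Finset.prod_sdiff hts (f := f)
  calc ∏ i ∈ s, f i = (∏ i ∈ s \ t, f i) * ∏ i ∈ t, f i := this.symm
    _ ≤ 1 * ∏ i ∈ t, f i := by
        apply mul_le_mul_of_nonneg_right
        · exact Finset.prod_le_one (fun i hi => h0 i (Finset.sdiff_subset hi))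
            (fun i hi => h1 i (Finset.sdiff_subset hi))
        · exact Finset.prod_nonneg fun i hi => h0 i (hts hi)
    _ = ∏ i ∈ t, f i := one_mul _

/-- **Core product inequality of Lemma 2.4.**
Let `N` be a finite set, `k ∈ ℕ`, and `p q : N → ℝ` with `0 ≤ q i ≤ p i ≤ 1` on `N`.
Let `T, B ⊆ N` with `|T| = k` and `B'' ⊆ B` with `|B''| = k`.  If, whenever `T \ B` is
nonempty, every `i ∈ B'' \ T` satisfies `q i ≤ p d` for all `d ∈ T \ B` (i.e.
`q i ≤ min_{d ∈ T \ B} p d`), then `∏_{i ∈ B} q i ≤ ∏_{i ∈ T} p i`. -/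
theorem core_product_inequality {ι : Type*} [DecidableEq ι]
    (N : Finset ι) (k : ℕ) (p q : ι → ℝ)
    (hq0 : ∀ i ∈ N, 0 ≤ q i) (hqp : ∀ i ∈ N, q i ≤ p i) (hp1 : ∀ i ∈ N, p i ≤ 1)
    (T B B'' : Finset ι) (hTN : T ⊆ N) (hBN : B ⊆ N) (hB'' : B'' ⊆ B)
    (hTcard : T.card = k) (hB''card : B''.card = k)
    (hgreedy : (T \ B).Nonempty → ∀ i ∈ B'' \ T, ∀ d ∈ T \ B, q i ≤ p d) :
    ∏ i ∈ B, q i ≤ ∏ i ∈ T, p i := by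
  have hq1 : ∀ i ∈ N, q i ≤ 1 := fun i hi => (hqp i hi).trans (hp1 i hi)
  have hp0 : ∀ i ∈ N, 0 ≤ p i := fun i hi => (hq0 i hi).trans (hqp i hi)
  -- split T
  have hTsplit : (∏ i ∈ T ∩ B, p i) * ∏ i ∈ T \ B, p i = ∏ i ∈ T, p i := by
    have h := Finset.prod_sdiff (f := p) (Finset.inter_subset_left (s₁ := T) (s₂ := B))
    rw [Finset.sdiff_inter_self_left] at h
    rw [mul_comm]; exact h
  by_cases hTB : (T \ B).Nonempty
  · -- c = min of p over T \ B
    set c : ℝ := (T \ B).inf' hTB p with hc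
    have hc0 : 0 ≤ c :=
      Finset.le_inf' hTB p fun d hd => hp0 d (hTN (Finset.mem_sdiff.mp hd).1)
    -- B'' \ T has at least |T \ B| elements
    have hcard : (T \ B).card ≤ (B'' \ T).card := by
      have h1 : (T \ B).card + (T ∩ B).card = k := by
        rw [Finset.card_sdiff_add_card_inter]; exact hTcard
      have h2 : (B'' \ T).card + (B'' ∩ T).card = k := by
        rw [Finset.card_sdiff_add_card_inter]; exact hB''card
      have h3 : (B'' ∩ T).card ≤ (T ∩ B).card := by
        apply Finset.card_le_card
        intro x hx
        rw [Finset.mem_inter] at hx ⊢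
        exact ⟨hx.2, hB'' hx.1⟩
      omega
    obtain ⟨S, hS, hScard⟩ := Finset.exists_subset_card_eq hcard
    -- chain
    have hstep1 : ∏ i ∈ B, q i ≤ ∏ i ∈ (B ∩ T) ∪ S, q i := by
      apply prod_subset_le q _ (fun i hi => hq0 i (hBN hi)) (fun i hi => hq1 i (hBN hi))
      apply Finset.union_subset Finset.inter_subset_left
      exact fun x hx => hB'' (Finset.mem_sdiff.mp (hS hx)).1
    have hdisj : Disjoint (B ∩ T) S := by
      apply Finset.disjoint_left.mpr
      intro x hx hxS
      exact (Finset.mem_sdiff.mp (hS hxS)).2 (Finset.mem_inter.mp hx).2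
    have hstep2 : ∏ i ∈ (B ∩ T) ∪ S, q i = (∏ i ∈ B ∩ T, q i) * ∏ i ∈ S, q i :=
      Finset.prod_union hdisj
    have hstep3 : ∏ i ∈ B ∩ T, q i ≤ ∏ i ∈ T ∩ B, p i := by
      rw [Finset.inter_comm]
      exact Finset.prod_le_prod (fun i hi => hq0 i (hTN (Finset.mem_inter.mp hi).1))
        (fun i hi => hqp i (hTN (Finset.mem_inter.mp hi).1))
    have hstep4 : ∏ i ∈ S, q i ≤ ∏ i ∈ T \ B, p i := by
      calc ∏ i ∈ S, q i ≤ ∏ _i ∈ S, c := by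
            apply Finset.prod_le_prod
            · intro i hi
              exact hq0 i (hBN (hB'' (Finset.mem_sdiff.mp (hS hi)).1))
            · intro i hi
              exact Finset.le_inf' hTB p (hgreedy hTB i (hS hi))
        _ = c ^ S.card := Finset.prod_const c
        _ = c ^ (T \ B).card := by rw [hScard]
        _ = ∏ _i ∈ T \ B, c := (Finset.prod_const c).symm
        _ ≤ ∏ i ∈ T \ B, p i :=
            Finset.prod_le_prod (fun _ _ => hc0) (fun i hi => Finset.inf'_le p hi)
    calc ∏ i ∈ B, q i ≤ (∏ i ∈ B ∩ T, q i) * ∏ i ∈ S, q i := by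
          rw [← hstep2]; exact hstep1
      _ ≤ (∏ i ∈ T ∩ B, p i) * ∏ i ∈ T \ B, p i := by
          apply mul_le_mul hstep3 hstep4
            (Finset.prod_nonneg fun i hi =>
              hq0 i (hBN (hB'' (Finset.mem_sdiff.mp (hS hi)).1)))
            (Finset.prod_nonneg fun i hi =>
              hp0 i (hTN (Finset.mem_inter.mp hi).1))
      _ = ∏ i ∈ T, p i := hTsplit
  · -- T ⊆ B
    have hTsub : T ⊆ B := by
      rw [Finset.not_nonempty_iff_eq_empty, Finset.sdiff_eq_empty_iff_subset] at hTB
      exact hTB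
    calc ∏ i ∈ B, q i ≤ ∏ i ∈ T, q i :=
          prod_subset_le q hTsub (fun i hi => hq0 i (hBN hi)) (fun i hi => hq1 i (hBN hi))
      _ ≤ ∏ i ∈ T, p i :=
          Finset.prod_le_prod (fun i hi => hq0 i (hTN hi)) (fun i hi => hqp i (hTN hi))
end

section
/- Stochastic dominance for monotone union-of-intersections events (Lemma 2.6): let (Ω, 𝒫) be a probability space, n ∈ ℕ, and let (Y_j)_{j∈Fin n} and (Z_j)_{j∈Fin n} be two families of real-valued random variables such that the Y_j are mutually independent, the Z_j are mutually independent, and for every j and every u ∈ ℝ, 𝒫[Y_j ≥ u] ≥ 𝒫[Z_j ≥ u] (Y_j stochastically dominates Z_j). Let R be a finite index set and for each h ∈ R let P_h ⊆ Fin n and t_h ∈ ℝ. Then 𝒫[⋃_{h∈R} ⋂_{j∈P_h} {Y_j ≥ t_h}] ≥ 𝒫[⋃_{h∈R} ⋂_{j∈P_h} {Z_j ≥ t_h}]. -/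
/-!
Every section `y ↦ 1[update x i y ∈ S]` of a monotone event `S ⊆ ℝⁿ` is the indicator of an upper
set of `ℝ`, whose mass can only grow when the law of the `i`-th coordinate is replaced by a
stochastically dominating one. By Tonelli the probability of `S` under a product law is an
integral of such sections, so swapping the marginals of `Z` for those of `Y` one coordinate at a
time increases it; independence identifies the joint laws with these product laws.
-/

open MeasureTheory ProbabilityTheory Set

namespace MeasureTheory

theorem measure_le_of_isUpperSet {ν κ : Measure ℝ} (hdom : ∀ c, ν (Ici c) ≤ κ (Ici c))
    {s : Set ℝ} (hs : IsUpperSet s) : ν s ≤ κ s := by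
  by_cases hleast : ∃ a, IsLeast s a
  · obtain ⟨a, has, hlb⟩ := hleast
    have : s = Ici a := Subset.antisymm (fun x hx => hlb hx) (hs.Ici_subset has)
    exact this ▸ hdom a
  -- With no least element, `s` is the countable directed union of the rays at its rational points.
  have hs_eq : s = ⋃ q : {q : ℚ // (q : ℝ) ∈ s}, Ici (q : ℝ) := by
    refine Subset.antisymm (fun x hx => ?_) (iUnion_subset fun q => hs.Ici_subset q.2)
    obtain ⟨y, hys, hyx⟩ : ∃ y ∈ s, y < x := by
      by_contra! h
      exact hleast ⟨x, hx, h⟩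
    obtain ⟨q, hyq, hqx⟩ := exists_rat_btwn hyx
    exact mem_iUnion.2 ⟨⟨q, hs hyq.le hys⟩, hqx.le⟩
  have hdir : Directed (· ⊆ ·) fun q : {q : ℚ // (q : ℝ) ∈ s} => Ici (q : ℝ) :=
    Antitone.directed_le fun q r hqr => Ici_subset_Ici.2 (by exact_mod_cast hqr)
  rw [hs_eq, hdir.measure_iUnion, hdir.measure_iUnion]
  exact iSup_mono fun q => hdom q

theorem lmarginal_congr_measure {δ : Type*} [DecidableEq δ] {X : δ → Type*}
    [∀ i, MeasurableSpace (X i)] {μ μ' : ∀ i, Measure (X i)} {s : Finset δ}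
    (h : ∀ i ∈ s, μ i = μ' i) (f : (∀ i, X i) → ENNReal) :
    lmarginal μ s f = lmarginal μ' s f := by
  have : (fun i : s => μ i) = fun i : s => μ' i := funext fun i => h i i.2
  unfold lmarginal
  rw [this]

namespace Measure

variable {ι : Type*} [Fintype ι]

theorem pi_apply_eq_lmarginal_section [DecidableEq ι] (m : ι → Measure ℝ)
    [∀ j, SigmaFinite (m j)] (i : ι) {S : Set (ι → ℝ)} (hS : MeasurableSet S) (x₀ : ι → ℝ) :
    Measure.pi m S =
      lmarginal m (Finset.univ.erase i) (fun x => m i (Function.update x i ⁻¹' S)) x₀ := by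
  have hsection (x : ι → ℝ) :
      ∫⁻ y, S.indicator 1 (Function.update x i y) ∂m i = m i (Function.update x i ⁻¹' S) := by
    rw [← lintegral_indicator_one (hS.preimage (measurable_update x))]
    rfl
  rw [← lintegral_indicator_one hS, lintegral_eq_lmarginal_univ x₀,
    lmarginal_erase' _ (measurable_one.indicator hS) (Finset.mem_univ i)]
  simp only [hsection]

theorem pi_le_pi_of_isUpperSet_of_ne_eq [DecidableEq ι] (m m' : ι → Measure ℝ)
    [∀ j, SigmaFinite (m j)] [∀ j, SigmaFinite (m' j)] (i : ι) (hne : ∀ j ≠ i, m j = m' j)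
    (hdom : ∀ c, m i (Ici c) ≤ m' i (Ici c)) {S : Set (ι → ℝ)} (hS : MeasurableSet S)
    (hS' : IsUpperSet S) : Measure.pi m S ≤ Measure.pi m' S := by
  let x₀ : ι → ℝ := 0
  calc Measure.pi m S
      = lmarginal m (Finset.univ.erase i) (fun x => m i (Function.update x i ⁻¹' S)) x₀ :=
        pi_apply_eq_lmarginal_section m i hS x₀
    _ ≤ lmarginal m (Finset.univ.erase i) (fun x => m' i (Function.update x i ⁻¹' S)) x₀ :=
        lmarginal_mono
          (fun x => measure_le_of_isUpperSet hdom (hS'.preimage Function.update_mono)) x₀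
    _ = lmarginal m' (Finset.univ.erase i) (fun x => m' i (Function.update x i ⁻¹' S)) x₀ := by
        rw [lmarginal_congr_measure fun j hj => hne j (Finset.ne_of_mem_erase hj)]
    _ = Measure.pi m' S := (pi_apply_eq_lmarginal_section m' i hS x₀).symm

theorem pi_le_pi_of_isUpperSet (ν κ : ι → Measure ℝ)
    [∀ j, SigmaFinite (ν j)] [∀ j, SigmaFinite (κ j)] (hdom : ∀ j c, ν j (Ici c) ≤ κ j (Ici c))
    {S : Set (ι → ℝ)} (hS : MeasurableSet S) (hS' : IsUpperSet S) :
    Measure.pi ν S ≤ Measure.pi κ S := by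
  classical
  have (A : Finset ι) (j : ι) : SigmaFinite (A.piecewise κ ν j) :=
    A.piecewise_cases κ ν (fun m => SigmaFinite m) inferInstance inferInstance
  suffices ∀ A : Finset ι, Measure.pi ν S ≤ Measure.pi (A.piecewise κ ν) S by
    simpa using this Finset.univ
  intro A
  induction A using Finset.induction with
  | empty => simp
  | insert a A ha ih =>
    refine ih.trans (pi_le_pi_of_isUpperSet_of_ne_eq _ _ a (fun j hj => ?_) ?_ hS hS')
    · rw [Finset.piecewise_insert_of_ne _ _ _ hj]
    · rw [Finset.piecewise_insert_self, Finset.piecewise_eq_of_notMem _ _ _ ha]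
      exact hdom a

end Measure

end MeasureTheory

namespace ProbabilityTheory

variable {Ω ι : Type*} [MeasurableSpace Ω] {μ : Measure Ω} [Fintype ι]

theorem iIndepFun.measure_preimage_eq_pi {β : ι → Type*} [∀ i, MeasurableSpace (β i)]
    {X : ∀ i, Ω → β i} (hX : ∀ i, AEMeasurable (X i) μ) (hind : iIndepFun X μ)
    {S : Set (∀ i, β i)} (hS : MeasurableSet S) :
    μ ((fun ω i => X i ω) ⁻¹' S) = Measure.pi (fun i => μ.map (X i)) S := by
  rw [← hind.map_fun_eq_pi_map hX,
    Measure.map_apply_of_aemeasurable (aemeasurable_pi_lambda _ hX) hS]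

theorem measure_preimage_le_of_isUpperSet_of_iIndepFun {Y Z : ι → Ω → ℝ}
    (hY : ∀ j, AEMeasurable (Y j) μ) (hZ : ∀ j, AEMeasurable (Z j) μ)
    (hYindep : iIndepFun Y μ) (hZindep : iIndepFun Z μ)
    (hdom : ∀ j u, μ {ω | u ≤ Z j ω} ≤ μ {ω | u ≤ Y j ω})
    {S : Set (ι → ℝ)} (hS : MeasurableSet S) (hS' : IsUpperSet S) :
    μ ((fun ω j => Z j ω) ⁻¹' S) ≤ μ ((fun ω j => Y j ω) ⁻¹' S) := by
  have := hYindep.isProbabilityMeasure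
  rw [hYindep.measure_preimage_eq_pi hY hS, hZindep.measure_preimage_eq_pi hZ hS]
  refine Measure.pi_le_pi_of_isUpperSet _ _ (fun j c => ?_) hS hS'
  rw [Measure.map_apply_of_aemeasurable (hZ j) measurableSet_Ici,
    Measure.map_apply_of_aemeasurable (hY j) measurableSet_Ici]
  exact hdom j c

end ProbabilityTheory

theorem monotone_event_stochastic_dominance_general
    {Ω : Type*} [MeasurableSpace Ω] (μ : Measure Ω)
    (n : ℕ) (Y Z : Fin n → Ω → ℝ)
    (hYmeas : ∀ j, Measurable (Y j)) (hZmeas : ∀ j, Measurable (Z j))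
    (hYindep : iIndepFun Y μ)
    (hZindep : iIndepFun Z μ)
    (hdom : ∀ (j : Fin n) (u : ℝ), μ {ω | u ≤ Z j ω} ≤ μ {ω | u ≤ Y j ω})
    {ρ : Type*} (R : Finset ρ) (P : ρ → Finset (Fin n)) (t : ρ → ℝ) :
    μ (⋃ h ∈ R, ⋂ j ∈ P h, {ω | t h ≤ Z j ω}) ≤
      μ (⋃ h ∈ R, ⋂ j ∈ P h, {ω | t h ≤ Y j ω}) := by
  let S : Set (Fin n → ℝ) := ⋃ h ∈ R, ⋂ j ∈ P h, {v | t h ≤ v j}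
  have hS : MeasurableSet S :=
    .biUnion R.countable_toSet fun h _ => .biInter (P h).countable_toSet fun j _ =>
      measurableSet_Ici.preimage (measurable_pi_apply j)
  have hS' : IsUpperSet S :=
    isUpperSet_iUnion₂ fun h _ => isUpperSet_iInter₂ fun j _ =>
      (isUpperSet_Ici (t h)).preimage (Function.monotone_eval j)
  have hevent (X : Fin n → Ω → ℝ) :
      ⋃ h ∈ R, ⋂ j ∈ P h, {ω | t h ≤ X j ω} = (fun ω j => X j ω) ⁻¹' S := by
    ext ω
    simp [S]
  rw [hevent Y, hevent Z]
  exact measure_preimage_le_of_isUpperSet_of_iIndepFun (fun j => (hYmeas j).aemeasurable)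
    (fun j => (hZmeas j).aemeasurable) hYindep hZindep hdom hS hS'

/-- **Stochastic dominance for monotone union-of-intersections events (Lemma 2.6).**
Let `(Y j)` and `(Z j)` be two families of real random variables on a probability space,
each mutually independent, with `Y j` stochastically dominating `Z j` for every `j`.
Then for any finite index set `R`, sets `P h ⊆ Fin n` and thresholds `t h`,
`Pr[⋃_{h ∈ R} ⋂_{j ∈ P h} {Y j ≥ t h}] ≥ Pr[⋃_{h ∈ R} ⋂_{j ∈ P h} {Z j ≥ t h}]`. -/
theorem monotone_event_stochastic_dominance
    {Ω : Type*} [MeasurableSpace Ω] (μ : Measure Ω) [IsProbabilityMeasure μ]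
    (n : ℕ) (Y Z : Fin n → Ω → ℝ)
    (hYmeas : ∀ j, Measurable (Y j)) (hZmeas : ∀ j, Measurable (Z j))
    (hYindep : iIndepFun Y μ)
    (hZindep : iIndepFun Z μ)
    (hdom : ∀ (j : Fin n) (u : ℝ), μ {ω | u ≤ Z j ω} ≤ μ {ω | u ≤ Y j ω})
    {ρ : Type*} (R : Finset ρ) (P : ρ → Finset (Fin n)) (t : ρ → ℝ) :
    μ (⋃ h ∈ R, ⋂ j ∈ P h, {ω | t h ≤ Z j ω}) ≤
      μ (⋃ h ∈ R, ⋂ j ∈ P h, {ω | t h ≤ Y j ω}) :=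
  monotone_event_stochastic_dominance_general μ n Y Z hYmeas hZmeas hYindep hZindep hdom R P t
end

section
/- Lemma 5.3 (smqi-nested), budget-parametrized form: with the almost-prefix sets S_d defined from nonnegative costs c : Fin n → ℝ as in the context, for all reals 0 ≤ d ≤ d' one has S_d ⊆ S_{d'}. (The paper applies this with d = y^i and d' = y^{i+1} for y > 1.) -/
open Finset

/-- The least `d`-big index (an index `j` with cost `c j > d`), with the convention
that it equals `n` if no `d`-big index exists. -/
noncomputable def aIdx (n : ℕ) (c : Fin n → ℝ) (d : ℝ) : ℕ :=
  sInf ({j : ℕ | ∃ hj : j < n, d < c ⟨j, hj⟩} ∪ {n})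

/-- The second least `d`-big index, with the convention that it equals `n` if
fewer than two `d`-big indices exist. -/
noncomputable def bIdx (n : ℕ) (c : Fin n → ℝ) (d : ℝ) : ℕ :=
  sInf ({j : ℕ | (∃ hj : j < n, d < c ⟨j, hj⟩) ∧ aIdx n c d < j} ∪ {n})

/-- `A_d`: the maximal prefix containing no `d`-big index, i.e. `{j : j < a_d}`. -/
noncomputable def Aset (n : ℕ) (c : Fin n → ℝ) (d : ℝ) : Finset (Fin n) :=
  Finset.univ.filter fun j => (j : ℕ) < aIdx n c d

/-- `B_d`: the segment strictly between the first and second `d`-big indices. -/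
noncomputable def Bset (n : ℕ) (c : Fin n → ℝ) (d : ℝ) : Finset (Fin n) :=
  Finset.univ.filter fun j => aIdx n c d < (j : ℕ) ∧ (j : ℕ) < bIdx n c d

open Classical in
/-- The largest subset of `E` that is downward closed within `E` (in the index order)
and has cost at most `bound`.  Since such sets form a chain, their union (here: `sup`)
is the largest one. -/
noncomputable def maxPrefixIn {n : ℕ} (E : Finset (Fin n)) (c : Fin n → ℝ) (bound : ℝ) :
    Finset (Fin n) :=
  (E.powerset.filter fun S =>
    (∀ j ∈ S, ∀ i ∈ E, i ≤ j → i ∈ S) ∧ ∑ j ∈ S, c j ≤ bound).sup id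

/-- The almost-prefix set `S_d`: if `c(A_d) > d`, the largest prefix contained in `A_d`
of cost at most `2d`; otherwise, the largest subset of `A_d ∪ B_d` that is downward
closed within `A_d ∪ B_d` and has cost at most `d`. -/
noncomputable def Sset (n : ℕ) (c : Fin n → ℝ) (d : ℝ) : Finset (Fin n) :=
  if d < ∑ j ∈ Aset n c d, c j then maxPrefixIn (Aset n c d) c (2 * d)
  else maxPrefixIn (Aset n c d ∪ Bset n c d) c d

section Aux
variable {n : ℕ} {c : Fin n → ℝ} {d d' : ℝ}

lemma aIdx_mem : aIdx n c d ∈ ({j : ℕ | ∃ hj : j < n, d < c ⟨j, hj⟩} ∪ {n} : Set ℕ) :=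
  Nat.sInf_mem ⟨n, Or.inr rfl⟩

lemma aIdx_le_n : aIdx n c d ≤ n := Nat.sInf_le (Or.inr rfl)

lemma lt_aIdx_cost {j : ℕ} (hj : j < n) (h : j < aIdx n c d) : c ⟨j, hj⟩ ≤ d := by
  by_contra hc'
  push_neg at hc'
  exact absurd (Nat.sInf_le (Or.inl ⟨hj, hc'⟩)) (not_le.mpr h)

lemma aIdx_mono (hdd' : d ≤ d') : aIdx n c d ≤ aIdx n c d' := by
  rcases aIdx_mem (n := n) (c := c) (d := d') with h | h
  · obtain ⟨hj, hcj⟩ := h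
    exact Nat.sInf_le (Or.inl ⟨hj, lt_of_le_of_lt hdd' hcj⟩)
  · rw [h]; exact aIdx_le_n

lemma bIdx_mem : bIdx n c d ∈
    ({j : ℕ | (∃ hj : j < n, d < c ⟨j, hj⟩) ∧ aIdx n c d < j} ∪ {n} : Set ℕ) :=
  Nat.sInf_mem ⟨n, Or.inr rfl⟩

lemma aIdx_le_bIdx : aIdx n c d ≤ bIdx n c d := by
  rcases bIdx_mem (n := n) (c := c) (d := d) with h | h
  · exact le_of_lt h.2
  · rw [h]; exact aIdx_le_n

lemma bIdx_le_aIdx' (hdd' : d ≤ d') (hlt : aIdx n c d < aIdx n c d') :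
    bIdx n c d ≤ aIdx n c d' := by
  rcases aIdx_mem (n := n) (c := c) (d := d') with h | h
  · obtain ⟨hj, hcj⟩ := h
    exact Nat.sInf_le (Or.inl ⟨⟨hj, lt_of_le_of_lt hdd' hcj⟩, hlt⟩)
  · rw [h]; exact Nat.sInf_le (Or.inr rfl)

lemma bIdx_mono_of_aIdx_eq (hdd' : d ≤ d') (heq : aIdx n c d = aIdx n c d') :
    bIdx n c d ≤ bIdx n c d' := by
  rcases bIdx_mem (n := n) (c := c) (d := d') with h | h
  · obtain ⟨⟨hj, hcj⟩, hgt⟩ := h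
    exact Nat.sInf_le (Or.inl ⟨⟨hj, lt_of_le_of_lt hdd' hcj⟩, heq ▸ hgt⟩)
  · rw [h]; exact Nat.sInf_le (Or.inr rfl)

lemma mem_Aset_iff {j : Fin n} : j ∈ Aset n c d ↔ (j : ℕ) < aIdx n c d := by
  simp [Aset]

lemma mem_AB_iff {j : Fin n} :
    j ∈ Aset n c d ∪ Bset n c d ↔ (j : ℕ) ≠ aIdx n c d ∧ (j : ℕ) < bIdx n c d := by
  have hab := aIdx_le_bIdx (n := n) (c := c) (d := d)
  simp only [Aset, Bset, Finset.mem_union, Finset.mem_filter, Finset.mem_univ, true_and]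
  omega

end Aux

section Aux2
variable {n : ℕ} {E : Finset (Fin n)} {c : Fin n → ℝ} {bound : ℝ}

lemma subset_maxPrefixIn {T : Finset (Fin n)} (hTE : T ⊆ E)
    (hcl : ∀ j ∈ T, ∀ i ∈ E, i ≤ j → i ∈ T) (hcost : ∑ j ∈ T, c j ≤ bound) :
    T ⊆ maxPrefixIn E c bound := by
  classical
  have hmem : T ∈ E.powerset.filter fun S =>
      (∀ j ∈ S, ∀ i ∈ E, i ≤ j → i ∈ S) ∧ ∑ j ∈ S, c j ≤ bound := by
    simp only [Finset.mem_filter, Finset.mem_powerset]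
    exact ⟨hTE, hcl, hcost⟩
  exact Finset.le_sup (f := (id : Finset (Fin n) → Finset (Fin n))) hmem

lemma maxPrefixIn_spec (hb : 0 ≤ bound) :
    maxPrefixIn E c bound ⊆ E ∧
      (∀ j ∈ maxPrefixIn E c bound, ∀ i ∈ E, i ≤ j → i ∈ maxPrefixIn E c bound) ∧
      ∑ j ∈ maxPrefixIn E c bound, c j ≤ bound := by
  classical
  set s : Set (Finset (Fin n)) :=
    {S | S ⊆ E ∧ (∀ j ∈ S, ∀ i ∈ E, i ≤ j → i ∈ S) ∧ ∑ j ∈ S, c j ≤ bound} with hs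
  have hcomp : ∀ S ∈ s, ∀ T ∈ s, S ⊆ T ∨ T ⊆ S := by
    intro S hS T hT
    by_cases hST : S ⊆ T
    · exact Or.inl hST
    · right
      obtain ⟨x, hxS, hxT⟩ := Finset.not_subset.mp hST
      intro y hyT
      rcases le_total x y with hxy | hyx
      · exact absurd (hT.2.1 y hyT x (hS.1 hxS) hxy) hxT
      · exact hS.2.1 x hxS y (hT.1 hyT) hyx
  have hsup : ∀ S ∈ s, ∀ T ∈ s, S ⊔ T ∈ s := by
    intro S hS T hT
    rcases hcomp S hS T hT with h | h
    · rwa [sup_eq_union, Finset.union_eq_right.mpr h]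
    · rwa [sup_eq_union, Finset.union_eq_left.mpr h]
  have hne : (E.powerset.filter fun S =>
      (∀ j ∈ S, ∀ i ∈ E, i ≤ j → i ∈ S) ∧ ∑ j ∈ S, c j ≤ bound).Nonempty := by
    refine ⟨∅, ?_⟩
    simp only [Finset.mem_filter, Finset.mem_powerset]
    exact ⟨Finset.empty_subset _, fun j hj => absurd hj (Finset.notMem_empty j),
      by simpa using hb⟩
  have hmem : maxPrefixIn E c bound ∈ s := by
    rw [maxPrefixIn, ← Finset.sup'_eq_sup hne id]
    refine Finset.sup'_mem s hsup _ hne id ?_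
    intro S hS
    simp only [Finset.mem_filter, Finset.mem_powerset] at hS
    exact hS
  exact hmem

end Aux2

/-- **Lemma 5.3 (smqi-nested), budget-parametrized form.**
For nonnegative costs and budgets `0 ≤ d ≤ d'`, the almost-prefix sets are nested:
`S_d ⊆ S_{d'}`. -/
theorem Sset_nested (n : ℕ) (c : Fin n → ℝ) (hc : ∀ j, 0 ≤ c j)
    (d d' : ℝ) (hd : 0 ≤ d) (hdd' : d ≤ d') :
    Sset n c d ⊆ Sset n c d' := by
  classical
  have hd' : (0 : ℝ) ≤ d' := hd.trans hdd'
  have ha_le : aIdx n c d ≤ aIdx n c d' := aIdx_mono hdd'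
  have hAA' : Aset n c d ⊆ Aset n c d' := by
    intro x hx
    exact mem_Aset_iff.mpr (lt_of_lt_of_le (mem_Aset_iff.mp hx) ha_le)
  by_cases h1 : d < ∑ j ∈ Aset n c d, c j
  · -- heavy d : S_d = maxPrefixIn (Aset d) c (2d), a genuine prefix
    have hSdef : Sset n c d = maxPrefixIn (Aset n c d) c (2 * d) := if_pos h1
    obtain ⟨hSE, hScl, hScost⟩ :=
      maxPrefixIn_spec (E := Aset n c d) (c := c) (bound := 2 * d) (by linarith)
    set M := maxPrefixIn (Aset n c d) c (2 * d) with hM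
    have hfull : ∀ j ∈ M, ∀ i : Fin n, i ≤ j → i ∈ M := by
      intro j hj i hij
      refine hScl j hj i ?_ hij
      have hjn : (j : ℕ) < aIdx n c d := mem_Aset_iff.mp (hSE hj)
      exact mem_Aset_iff.mpr (lt_of_le_of_lt (Fin.le_def.mp hij) hjn)
    have hMA' : M ⊆ Aset n c d' := hSE.trans hAA'
    by_cases h2 : d' < ∑ j ∈ Aset n c d', c j
    · rw [hSdef, Sset, if_pos h2]
      exact subset_maxPrefixIn hMA' (fun j hj i _ hij => hfull j hj i hij)
        (hScost.trans (by linarith))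
    · rw [hSdef, Sset, if_neg h2]
      refine subset_maxPrefixIn (hMA'.trans Finset.subset_union_left)
        (fun j hj i _ hij => hfull j hj i hij) ?_
      calc ∑ j ∈ M, c j ≤ ∑ j ∈ Aset n c d', c j :=
              Finset.sum_le_sum_of_subset_of_nonneg hMA' (fun i _ _ => hc i)
        _ ≤ d' := not_lt.mp h2
  · -- light d : S_d = maxPrefixIn (Aset d ∪ Bset d) c d
    have hSdef : Sset n c d = maxPrefixIn (Aset n c d ∪ Bset n c d) c d := if_neg h1
    obtain ⟨hSE, hScl, hScost⟩ :=
      maxPrefixIn_spec (E := Aset n c d ∪ Bset n c d) (c := c) (bound := d) hd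
    set M := maxPrefixIn (Aset n c d ∪ Bset n c d) c d with hM
    rcases eq_or_lt_of_le ha_le with heq | hlt
    · -- same first big index
      have hbb' : bIdx n c d ≤ bIdx n c d' := bIdx_mono_of_aIdx_eq hdd' heq
      have hAeq : Aset n c d' = Aset n c d := by
        ext x
        simp [mem_Aset_iff, ← heq]
      have h2 : ¬ d' < ∑ j ∈ Aset n c d', c j := by
        rw [hAeq]
        push_neg
        linarith [not_lt.mp h1]
      rw [hSdef, Sset, if_neg h2]
      refine subset_maxPrefixIn ?_ ?_ (hScost.trans hdd')
      · intro x hx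
        obtain ⟨hne, hlt'⟩ := mem_AB_iff.mp (hSE hx)
        exact mem_AB_iff.mpr ⟨heq ▸ hne, lt_of_lt_of_le hlt' hbb'⟩
      · intro j hj i hi hij
        obtain ⟨hine, _⟩ := mem_AB_iff.mp hi
        obtain ⟨_, hjb⟩ := mem_AB_iff.mp (hSE hj)
        refine hScl j hj i (mem_AB_iff.mpr ⟨heq ▸ hine, lt_of_le_of_lt (Fin.le_def.mp hij) hjb⟩) hij
    · -- a_d < a_{d'}
      have hba' : bIdx n c d ≤ aIdx n c d' := bIdx_le_aIdx' hdd' hlt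
      have han : aIdx n c d < n := lt_of_lt_of_le hlt aIdx_le_n
      set afin : Fin n := ⟨aIdx n c d, han⟩ with hafin
      have hca : c afin ≤ d' := lt_aIdx_cost han hlt
      set D := Finset.univ.filter (fun j : Fin n => ∃ k ∈ M, (j : ℕ) ≤ (k : ℕ)) with hD
      have hMD : M ⊆ D := fun x hx =>
        Finset.mem_filter.mpr ⟨Finset.mem_univ x, ⟨x, hx, le_refl _⟩⟩
      have hDA' : D ⊆ Aset n c d' := by
        intro x hx
        obtain ⟨-, k, hk, hxk⟩ := Finset.mem_filter.mp hx
        obtain ⟨-, hkb⟩ := mem_AB_iff.mp (hSE hk)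
        exact mem_Aset_iff.mpr (lt_of_lt_of_le (lt_of_le_of_lt hxk hkb) hba')
      have hDfull : ∀ j ∈ D, ∀ i : Fin n, i ≤ j → i ∈ D := by
        intro j hj i hij
        obtain ⟨-, k, hk, hjk⟩ := Finset.mem_filter.mp hj
        exact Finset.mem_filter.mpr ⟨Finset.mem_univ i, ⟨k, hk, (Fin.le_def.mp hij).trans hjk⟩⟩
      have hDsub : D ⊆ insert afin M := by
        intro x hx
        by_cases hxa : x = afin
        · exact hxa ▸ Finset.mem_insert_self _ _
        · refine Finset.mem_insert_of_mem ?_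
          obtain ⟨-, k, hk, hxk⟩ := Finset.mem_filter.mp hx
          obtain ⟨-, hkb⟩ := mem_AB_iff.mp (hSE hk)
          have hxne : (x : ℕ) ≠ aIdx n c d := fun h => hxa (Fin.ext h)
          exact hScl k hk x (mem_AB_iff.mpr ⟨hxne, lt_of_le_of_lt hxk hkb⟩) (Fin.le_def.mpr hxk)
      by_cases h2 : d' < ∑ j ∈ Aset n c d', c j
      · rw [hSdef, Sset, if_pos h2]
        refine hMD.trans (subset_maxPrefixIn hDA' (fun j hj i _ hij => hDfull j hj i hij) ?_)
        have h3 : ∑ j ∈ D, c j ≤ ∑ j ∈ insert afin M, c j :=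
          Finset.sum_le_sum_of_subset_of_nonneg hDsub (fun i _ _ => hc i)
        have h4 : ∑ j ∈ insert afin M, c j ≤ c afin + ∑ j ∈ M, c j := by
          by_cases hm : afin ∈ M
          · rw [Finset.insert_eq_self.mpr hm]
            linarith [hc afin]
          · rw [Finset.sum_insert hm]
        linarith
      · rw [hSdef, Sset, if_neg h2]
        refine hMD.trans (subset_maxPrefixIn (hDA'.trans Finset.subset_union_left)
          (fun j hj i _ hij => hDfull j hj i hij) ?_)
        calc ∑ j ∈ D, c j ≤ ∑ j ∈ Aset n c d', c j :=
                Finset.sum_le_sum_of_subset_of_nonneg hDA' (fun i _ _ => hc i)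
          _ ≤ d' := not_lt.mp h2
end

section
/- Left-endpoint dominance of the almost-prefix set (inequality (30)): with the almost-prefix sets S_d defined from nonnegative costs c : Fin n → ℝ as in the context, let ℓ : Fin n → ℝ be nondecreasing (ℓ_0 ≤ ℓ_1 ≤ ⋯ ≤ ℓ_{n−1}) and d ≥ 0, and suppose S_d ≠ Fin n. Then for every Q ⊆ Fin n with c(Q) ≤ d, the set Fin n ∖ Q is nonempty and min_{j ∉ S_d} ℓ_j ≥ min_{j ∉ Q} ℓ_j. -/
open Finset

open Classical in
lemma mp_contains {n : ℕ} {E T : Finset (Fin n)} {c : Fin n → ℝ} {bound : ℝ}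
    (hTE : T ⊆ E) (hdc : ∀ j ∈ T, ∀ i ∈ E, i ≤ j → i ∈ T)
    (hcost : ∑ j ∈ T, c j ≤ bound) : T ⊆ maxPrefixIn E c bound := by
  have hmem : T ∈ (E.powerset.filter fun S =>
      (∀ j ∈ S, ∀ i ∈ E, i ≤ j → i ∈ S) ∧ ∑ j ∈ S, c j ≤ bound) := by
    rw [Finset.mem_filter, Finset.mem_powerset]
    exact ⟨hTE, hdc, hcost⟩
  exact Finset.le_sup (f := id) hmem

open Classical in
lemma mp_subset {n : ℕ} {E : Finset (Fin n)} {c : Fin n → ℝ} {bound : ℝ} :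
    maxPrefixIn E c bound ⊆ E := by
  intro x hx
  rw [maxPrefixIn, Finset.mem_sup] at hx
  obtain ⟨T, hT, hxT⟩ := hx
  exact Finset.mem_powerset.mp (Finset.mem_filter.mp hT).1 hxT

lemma aIdx_spec (n : ℕ) (c : Fin n → ℝ) (d : ℝ) (h : aIdx n c d < n) :
    d < c ⟨aIdx n c d, h⟩ := by
  have hne : (({j : ℕ | ∃ hj : j < n, d < c ⟨j, hj⟩} ∪ {n}) : Set ℕ).Nonempty :=
    ⟨n, Or.inr rfl⟩
  have hmem := Nat.sInf_mem hne
  rcases hmem with h1 | h2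
  · obtain ⟨hj, hcj⟩ := h1
    exact hcj
  · exfalso
    have : aIdx n c d = n := h2
    omega

/-- **Left-endpoint dominance of the almost-prefix set (inequality (30)).**
With nonnegative costs `c`, nondecreasing left endpoints `ℓ`, budget `d ≥ 0`, and
`S_d ≠ Fin n`: for every `Q` with `c(Q) ≤ d`, the complement of `Q` is nonempty and
`min_{j ∉ S_d} ℓ j ≥ min_{j ∉ Q} ℓ j`. -/

theorem Sset_left_endpoint_dominance (n : ℕ) (c : Fin n → ℝ) (hc : ∀ j, 0 ≤ c j)
    (ℓ : Fin n → ℝ) (hℓ : Monotone ℓ) (d : ℝ) (hd : 0 ≤ d)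
    (hS : Sset n c d ≠ Finset.univ)
    (Q : Finset (Fin n)) (hQ : ∑ j ∈ Q, c j ≤ d) :
    ∃ (hQc : Qᶜ.Nonempty) (hSc : (Sset n c d)ᶜ.Nonempty),
      Qᶜ.inf' hQc ℓ ≤ (Sset n c d)ᶜ.inf' hSc ℓ := by
  classical
  have hSc : (Sset n c d)ᶜ.Nonempty := by
    rw [Finset.nonempty_iff_ne_empty]
    intro h
    exact hS (by simpa [Finset.compl_eq_empty_iff] using h)
  set m : Fin n := (Sset n c d)ᶜ.min' hSc with hm_def
  have hm : m ∉ Sset n c d := by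
    have := Finset.min'_mem _ hSc
    simpa using this
  have hprefix : ∀ j : Fin n, j < m → j ∈ Sset n c d := by
    intro j hj
    by_contra hjS
    have : m ≤ j := Finset.min'_le _ _ (by simpa using hjS)
    exact absurd hj (not_lt.mpr this)
  -- key: the full prefix up to and including m has cost > d
  have hkey : d < ∑ j ∈ Finset.Iic m, c j := by
    have hsingle : c m ≤ ∑ j ∈ Finset.Iic m, c j :=
      Finset.single_le_sum (fun i _ => hc i) (Finset.mem_Iic.mpr le_rfl)
    by_cases hcase : d < ∑ j ∈ Aset n c d, c j
    · -- S = maxPrefixIn (Aset n c d) c (2d)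
      have hSeq : Sset n c d = maxPrefixIn (Aset n c d) c (2 * d) := by
        rw [Sset, if_pos hcase]
      rcases lt_trichotomy (m : ℕ) (aIdx n c d) with hlt | heq | hgt
      · by_contra hnot
        push_neg at hnot
        have h2d : ∑ j ∈ Finset.Iic m, c j ≤ 2 * d := by linarith
        have hsub : Finset.Iic m ⊆ Aset n c d := by
          intro j hj
          rw [Finset.mem_Iic] at hj
          rw [Aset, Finset.mem_filter]
          refine ⟨Finset.mem_univ _, ?_⟩
          have : (j : ℕ) ≤ (m : ℕ) := hj
          omega
        have hdc : ∀ j ∈ Finset.Iic m, ∀ i ∈ Aset n c d, i ≤ j → i ∈ Finset.Iic m := by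
          intro j hj i _ hij
          rw [Finset.mem_Iic] at hj ⊢
          exact le_trans hij hj
        have := mp_contains hsub hdc h2d (Finset.mem_Iic.mpr (le_refl m))
        rw [← hSeq] at this
        exact hm this
      · have hn : aIdx n c d < n := heq ▸ m.isLt
        have hcm : d < c m := by
          have := aIdx_spec n c d hn
          have hfin : (⟨aIdx n c d, hn⟩ : Fin n) = m := by
            apply Fin.ext; simp [heq]
          rwa [hfin] at this
        linarith
      · exfalso
        have hn : aIdx n c d < n := lt_trans hgt m.isLt
        have haS : (⟨aIdx n c d, hn⟩ : Fin n) ∈ Sset n c d := by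
          apply hprefix
          simpa [Fin.lt_def] using hgt
        rw [hSeq] at haS
        have := mp_subset haS
        rw [Aset, Finset.mem_filter] at this
        simp at this
    · -- S = maxPrefixIn (Aset ∪ Bset) c d
      push_neg at hcase
      have hSeq : Sset n c d = maxPrefixIn (Aset n c d ∪ Bset n c d) c d := by
        rw [Sset, if_neg (not_lt.mpr hcase)]
      have hAS : Aset n c d ⊆ Sset n c d := by
        rw [hSeq]
        apply mp_contains Finset.subset_union_left
        · intro j hj i _ hij
          rw [Aset, Finset.mem_filter] at hj ⊢
          refine ⟨Finset.mem_univ _, ?_⟩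
          have : (i : ℕ) ≤ (j : ℕ) := hij
          omega
        · exact hcase
      have hmA : m ∉ Aset n c d := fun h => hm (hAS h)
      have hge : aIdx n c d ≤ (m : ℕ) := by
        by_contra h
        push_neg at h
        exact hmA (by rw [Aset, Finset.mem_filter]; exact ⟨Finset.mem_univ _, h⟩)
      have hn : aIdx n c d < n := lt_of_le_of_lt hge m.isLt
      rcases eq_or_lt_of_le hge with heq | hgt
      · have hcm : d < c m := by
          have := aIdx_spec n c d hn
          have hfin : (⟨aIdx n c d, hn⟩ : Fin n) = m := by
            apply Fin.ext; simp [heq]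
          rwa [hfin] at this
        linarith
      · exfalso
        have haS : (⟨aIdx n c d, hn⟩ : Fin n) ∈ Sset n c d := by
          apply hprefix
          simpa [Fin.lt_def] using hgt
        rw [hSeq] at haS
        have := mp_subset haS
        rw [Finset.mem_union, Aset, Bset, Finset.mem_filter, Finset.mem_filter] at this
        simp at this
  -- there is some q ∉ Q with q ≤ m
  have hq : ∃ q : Fin n, q ∉ Q ∧ q ≤ m := by
    by_contra h
    push_neg at h
    have hsub : Finset.Iic m ⊆ Q := by
      intro j hj
      by_contra hjQ
      exact absurd (Finset.mem_Iic.mp hj) (not_le.mpr (h j hjQ))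
    have : ∑ j ∈ Finset.Iic m, c j ≤ ∑ j ∈ Q, c j :=
      Finset.sum_le_sum_of_subset_of_nonneg hsub (fun i _ _ => hc i)
    linarith
  obtain ⟨q, hqQ, hqm⟩ := hq
  have hQc : Qᶜ.Nonempty := ⟨q, by simpa using hqQ⟩
  refine ⟨hQc, hSc, ?_⟩
  apply Finset.le_inf'
  intro b hb
  have hmb : m ≤ b := Finset.min'_le _ _ hb
  calc Qᶜ.inf' hQc ℓ ≤ ℓ q := Finset.inf'_le _ (by simpa using hqQ)
    _ ≤ ℓ b := hℓ (le_trans hqm hmb)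
end

section
/- Left-endpoint dominance of the maximal prefix: let n ∈ ℕ, let c : Fin n → ℝ be nonnegative costs with c(T) := ∑_{j∈T} c_j, let ℓ : Fin n → ℝ be nondecreasing (ℓ_0 ≤ ℓ_1 ≤ ⋯ ≤ ℓ_{n−1}), and let d ≥ 0. Let T_d be the maximal prefix {0, 1, …, m−1} with c(T_d) ≤ d, and assume T_d ≠ Fin n. Then for every Q ⊆ Fin n with c(Q) ≤ d, the set Fin n ∖ Q is nonempty and min_{j ∉ Q} ℓ_j ≤ min_{j ∉ T_d} ℓ_j. -/
open Finset

open Classical in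
/-- The maximal prefix (downward-closed subset of `Fin n`) with cost at most `bound`.
Since prefixes form a chain, their union (here: `sup`) is the largest one, i.e. the
set `{0, 1, …, m−1}` for the largest feasible `m`. -/
noncomputable def maxPrefix (n : ℕ) (c : Fin n → ℝ) (bound : ℝ) : Finset (Fin n) :=
  ((Finset.univ : Finset (Fin n)).powerset.filter fun S =>
    (∀ j ∈ S, ∀ i : Fin n, i ≤ j → i ∈ S) ∧ ∑ j ∈ S, c j ≤ bound).sup id

/-! If `Q` contained all of `Iic t` for some `t` outside the maximal prefix, then `Iic t` would
be a prefix of cost at most `c(Q) ≤ d` (costs are nonnegative), hence inside the maximal prefix.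
So below every `t ∉ T_d` lies some `j ∉ Q`, and `ℓ j ≤ ℓ t` by monotonicity. -/

namespace maxPrefix

variable {n : ℕ} {c : Fin n → ℝ} {bound : ℝ}

theorem subset_of_isLowerSet {S : Finset (Fin n)} (hS : IsLowerSet (S : Set (Fin n)))
    (hcost : ∑ j ∈ S, c j ≤ bound) : S ⊆ maxPrefix n c bound := by
  classical
  refine le_sup (f := id) (mem_filter.2 ⟨mem_powerset.2 (subset_univ S), ?_, hcost⟩)
  exact fun j hj i hij => hS hij hj

theorem exists_notMem_le_of_notMem (hc : ∀ j, 0 ≤ c j) {Q : Finset (Fin n)}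
    (hQ : ∑ j ∈ Q, c j ≤ bound) {t : Fin n} (ht : t ∉ maxPrefix n c bound) :
    ∃ j ∉ Q, j ≤ t := by
  by_contra! hQt
  have hIic : Iic t ⊆ Q := fun i hi => by
    by_contra hiQ
    exact (hQt i hiQ).not_ge (mem_Iic.1 hi)
  have hcost : ∑ j ∈ Iic t, c j ≤ bound :=
    (sum_le_sum_of_subset_of_nonneg hIic fun i _ _ => hc i).trans hQ
  exact ht (subset_of_isLowerSet (by simpa using isLowerSet_Iic t) hcost (mem_Iic.2 le_rfl))

end maxPrefix

theorem maxPrefix_left_endpoint_dominance_general (n : ℕ) (c : Fin n → ℝ) (hc : ∀ j, 0 ≤ c j)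
    (ℓ : Fin n → ℝ) (hℓ : Monotone ℓ) (d : ℝ)
    (hT : maxPrefix n c d ≠ Finset.univ)
    (Q : Finset (Fin n)) (hQ : ∑ j ∈ Q, c j ≤ d) :
    ∃ (hQc : Qᶜ.Nonempty) (hTc : (maxPrefix n c d)ᶜ.Nonempty),
      Qᶜ.inf' hQc ℓ ≤ (maxPrefix n c d)ᶜ.inf' hTc ℓ := by
  have hTc : (maxPrefix n c d)ᶜ.Nonempty := by
    rwa [nonempty_iff_ne_empty, Ne, compl_eq_empty_iff]
  have below : ∀ t ∈ (maxPrefix n c d)ᶜ, ∃ j ∈ Qᶜ, j ≤ t := fun t ht => by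
    simpa only [mem_compl] using maxPrefix.exists_notMem_le_of_notMem hc hQ (mem_compl.1 ht)
  obtain ⟨t, ht⟩ := hTc
  obtain ⟨j, hj, -⟩ := below t ht
  refine ⟨⟨j, hj⟩, ⟨t, ht⟩, le_inf' _ _ fun i hi => ?_⟩
  obtain ⟨k, hk, hki⟩ := below i hi
  exact (inf'_le ℓ hk).trans (hℓ hki)

/-- **Left-endpoint dominance of the maximal prefix.**
With nonnegative costs `c`, nondecreasing left endpoints `ℓ`, budget `d ≥ 0`, and
`T_d` the maximal prefix of cost at most `d` with `T_d ≠ Fin n`: for every `Q` with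
`c(Q) ≤ d`, the complement of `Q` is nonempty and
`min_{j ∉ Q} ℓ j ≤ min_{j ∉ T_d} ℓ j`. -/
theorem maxPrefix_left_endpoint_dominance (n : ℕ) (c : Fin n → ℝ) (hc : ∀ j, 0 ≤ c j)
    (ℓ : Fin n → ℝ) (hℓ : Monotone ℓ) (d : ℝ) (hd : 0 ≤ d)
    (hT : maxPrefix n c d ≠ Finset.univ)
    (Q : Finset (Fin n)) (hQ : ∑ j ∈ Q, c j ≤ d) :
    ∃ (hQc : Qᶜ.Nonempty) (hTc : (maxPrefix n c d)ᶜ.Nonempty),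
      Qᶜ.inf' hQc ℓ ≤ (maxPrefix n c d)ᶜ.inf' hTc ℓ :=
  maxPrefix_left_endpoint_dominance_general n c hc ℓ hℓ d hT Q hQ
end
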